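/- arXiv:2603.00064 — 7 statements merged into one kernel-verified Lean document; each statement's English description precedes it below -/
import Mathlib

section
/- If C is a proper convex subset of Z_p^n (i.e., C ≠ Z_p^n and C is empty or a coset of a Z_p-submodule of Q_p^n contained in Z_p^n), then there exists a closed ball of radius 1/p in Z_p^n (that is, a coset x + p·Z_p^n with x ∈ Z_p^n) which is disjoint from C. -/
/-- A subset of a `ℚ_[p]`-vector space is convex if it is empty or a coset of a
`ℤ_[p]`-submodule. -/
def PadicConvex (p : ℕ) [Fact p.Prime] {V : Type*} [AddCommGroup V]
    [Module ℚ_[p] V] [Module ℤ_[p] V] [IsScalarTower ℤ_[p] ℚ_[p] V]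
    (C : Set V) : Prop :=
  C = ∅ ∨ ∃ (L : Submodule ℤ_[p] V) (u : V), C = (· + u) '' (L : Set V)

/-!
Write `C = u + L` with `u ∈ ℤ_pⁿ`; properness says `ℤ_pⁿ ⊄ L`. Balls of radius `1/p` are the
cosets of `𝔪 • ℤ_pⁿ` (`𝔪 = pℤ_p`), and the ball around `w + u` meets `C` exactly when
`w ∈ L + 𝔪 • ℤ_pⁿ`. Since `ℤ_pⁿ` is finitely generated over the local ring `ℤ_p`, Nakayama's
lemma shows `ℤ_pⁿ ⊄ L + 𝔪 • ℤ_pⁿ`, which supplies `w`.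
-/

open IsLocalRing Pointwise

theorem Submodule.exists_mem_notMem_sup_maximalIdeal_smul {R M : Type*} [CommRing R]
    [IsLocalRing R] [AddCommGroup M] [Module R M] {L N : Submodule R M} (hN : N.FG)
    (hNL : ¬N ≤ L) : ∃ w ∈ N, w ∉ L ⊔ maximalIdeal R • N := by
  by_contra! h
  exact hNL <| le_of_le_smul_of_le_jacobson_bot hN (maximalIdeal_le_jacobson ⊥) h

theorem Submodule.inter_coset_eq_empty_of_sub_notMem_sup {R M : Type*} [Ring R]
    [AddCommGroup M] [Module R M] {L N : Submodule R M} {u v : M} (h : v - u ∉ L ⊔ N) :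
    {y | y - v ∈ N} ∩ (· + u) '' (L : Set M) = ∅ := by
  refine Set.eq_empty_of_forall_notMem ?_
  rintro _ ⟨hy, l, hl, rfl⟩
  have hvu : v - u = l - (l + u - v) := by abel
  exact h (hvu ▸ sub_mem (mem_sup_left hl) (mem_sup_right hy))

namespace Padic

variable {p : ℕ} [Fact p.Prime]

theorem mem_submodule_one_iff {x : ℚ_[p]} : x ∈ (1 : Submodule ℤ_[p] ℚ_[p]) ↔ ‖x‖ ≤ 1 :=
  Submodule.mem_one.trans ⟨fun ⟨a, ha⟩ => ha ▸ a.norm_le_one, fun hx => ⟨⟨x, hx⟩, rfl⟩⟩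

theorem norm_le_inv_p_iff {x : ℚ_[p]} : ‖x‖ ≤ (p : ℝ)⁻¹ ↔ ‖x / p‖ ≤ 1 := by
  have hp : (0 : ℝ) < p := Nat.cast_pos.2 (Fact.out : p.Prime).pos
  rw [norm_div, norm_p, div_le_one (inv_pos.2 hp)]

variable (p) (ι : Type*)

noncomputable def unitPolydisc : Submodule ℤ_[p] (ι → ℚ_[p]) :=
  Submodule.pi Set.univ fun _ => 1

variable {p ι}

theorem mem_unitPolydisc {x : ι → ℚ_[p]} : x ∈ unitPolydisc p ι ↔ ∀ i, ‖x i‖ ≤ 1 := by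
  simp only [unitPolydisc, Submodule.mem_pi, Set.mem_univ, true_imp_iff, mem_submodule_one_iff]

theorem fg_unitPolydisc [Finite ι] : (unitPolydisc p ι).FG :=
  Submodule.fg_pi fun _ =>
    Submodule.one_eq_span (R := ℤ_[p]) (A := ℚ_[p]) ▸ Submodule.fg_span_singleton 1

theorem mem_maximalIdeal_smul_unitPolydisc {x : ι → ℚ_[p]} :
    x ∈ maximalIdeal ℤ_[p] • unitPolydisc p ι ↔ ∀ i, ‖x i‖ ≤ (p : ℝ)⁻¹ := by
  have hp : (p : ℚ_[p]) ≠ 0 := Nat.cast_ne_zero.2 (Fact.out : p.Prime).ne_zero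
  rw [PadicInt.maximalIdeal_eq_span_p, Submodule.ideal_span_singleton_smul,
    Submodule.mem_smul_pointwise_iff_exists]
  simp_rw [norm_le_inv_p_iff, ← mem_unitPolydisc]
  constructor
  · rintro ⟨b, hb, rfl⟩
    convert hb using 1
    ext i
    show (p : ℚ_[p]) * b i / p = b i
    field_simp
  · intro hx
    refine ⟨_, hx, funext fun i => ?_⟩
    show (p : ℚ_[p]) * (x i / p) = x i
    field_simp

end Padic

open Padic in
theorem proper_convex_disjoint_ball (p : ℕ) [Fact p.Prime] (n : ℕ)
    (C : Set (Fin n → ℚ_[p]))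
    (hsub : C ⊆ {x | ∀ i, ‖x i‖ ≤ 1})
    (hne : C ≠ {x | ∀ i, ‖x i‖ ≤ 1})
    (hconv : PadicConvex p C) :
    ∃ v : Fin n → ℚ_[p], (∀ i, ‖v i‖ ≤ 1) ∧
      {y : Fin n → ℚ_[p] | ∀ i, ‖y i - v i‖ ≤ (p : ℝ)⁻¹} ∩ C = ∅ := by
  rcases hconv with rfl | ⟨L, u, rfl⟩
  · exact ⟨0, by simp, Set.inter_empty _⟩
  have hdisc : {x : Fin n → ℚ_[p] | ∀ i, ‖x i‖ ≤ 1} = unitPolydisc p (Fin n) :=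
    Set.ext fun _ => mem_unitPolydisc.symm
  rw [hdisc] at hsub hne
  have hu : u ∈ unitPolydisc p (Fin n) := hsub ⟨0, L.zero_mem, zero_add u⟩
  have hL : ¬unitPolydisc p (Fin n) ≤ L := fun hle => hne <| hsub.antisymm
    fun z hz => ⟨z - u, hle (sub_mem hz hu), sub_add_cancel z u⟩
  obtain ⟨w, hw, hwL⟩ := Submodule.exists_mem_notMem_sup_maximalIdeal_smul fg_unitPolydisc hL
  refine ⟨w + u, mem_unitPolydisc.1 (add_mem hw hu), ?_⟩
  simp_rw [← Pi.sub_apply, ← mem_maximalIdeal_smul_unitPolydisc]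
  exact Submodule.inter_coset_eq_empty_of_sub_notMem_sup (by rwa [add_sub_cancel_right])
end

section
/- Let f : Z_p^n → Z_p be an injective continuous function. Then there exists δ > 0 such that for every continuous function g : Z_p^n → Q_p which is constant in some direction on some ball of radius 1/p in Z_p^n, one has ∫_{Z_p^n} |f(x) − g(x)| dμ(x) ≥ δ, where μ is the Haar probability measure on Z_p^n. -/
open MeasureTheory Metric

/-!
Injectivity and compactness give `ε > 0` with `ε ≤ ‖f (x + h) - f x‖` for all `x` and all `h`
with `‖h‖ = 1/p`. If `g` is `h`-periodic on a ball `B` of radius `1/p`, then on `B` the difference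
`f (x + h) - f x` equals `φ (x + h) - φ x` for `φ = f - g`, and since translation by `h` preserves
both `B` (ultrametric inequality) and `μ`, integrating over `B` gives `ε μ(B) ≤ 2 ∫ ‖φ‖ dμ`.
The measure `μ(B)` does not depend on the centre of `B`, and it is positive because an invariant
probability measure on a compact group charges every open set.
-/

theorem exists_pos_le_norm_sub_add_of_injective {G E : Type*} [TopologicalSpace G]
    [AddLeftCancelMonoid G] [ContinuousAdd G] [CompactSpace G] [NormedAddCommGroup E]
    {f : G → E} (hf : Continuous f) (hinj : Function.Injective f) {K : Set G} (hK : IsCompact K)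
    (hK0 : (0 : G) ∉ K) :
    ∃ ε > 0, ∀ x, ∀ h ∈ K, ε ≤ ‖f (x + h) - f x‖ := by
  have hpos : ∀ z ∈ Set.univ ×ˢ K, 0 < ‖f (z.1 + z.2) - f z.1‖ := by
    rintro ⟨x, h⟩ ⟨-, hh⟩
    rw [norm_pos_iff, sub_ne_zero, hinj.ne_iff, Ne, add_eq_left]
    exact ne_of_mem_of_not_mem hh hK0
  obtain ⟨ε, hε, hεle⟩ := (isCompact_univ.prod hK).exists_forall_le'
    (by fun_prop : Continuous fun z : G × G ↦ ‖f (z.1 + z.2) - f z.1‖).continuousOn hpos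
  exact ⟨ε, hε, fun x h hh ↦ hεle (x, h) ⟨trivial, hh⟩⟩

theorem IsUltrametricDist.preimage_add_right_closedBall_of_norm_le {E : Type*}
    [SeminormedAddCommGroup E] [IsUltrametricDist E] {v h : E} {r : ℝ} (hh : ‖h‖ ≤ r) :
    (· + h) ⁻¹' closedBall v r = closedBall v r := by
  ext x
  have hx : x + h ∈ closedBall x r := by simpa [dist_eq_norm] using hh
  rw [Set.mem_preimage, mem_closedBall_comm, ← closedBall_eq_of_mem hx, mem_closedBall_comm]

section Invariant

variable {G E : Type*} [MeasurableSpace G] [AddGroup G] [MeasurableAdd G] {μ : Measure G}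
  [μ.IsAddRightInvariant] [NormedAddCommGroup E] {s : Set G} {h : G}

theorem setIntegral_norm_sub_comp_add_right_le {φ : G → E} (hφ : Integrable φ μ)
    (hs : (· + h) ⁻¹' s = s) :
    ∫ x in s, ‖φ (x + h) - φ x‖ ∂μ ≤ 2 * ∫ x, ‖φ x‖ ∂μ := by
  have hφh : Integrable (fun x ↦ φ (x + h)) μ := hφ.comp_add_right h
  have htrans : ∫ x in s, ‖φ (x + h)‖ ∂μ = ∫ x in s, ‖φ x‖ ∂μ := by
    conv_lhs => rw [← hs]
    exact (measurePreserving_add_right μ h).setIntegral_preimage_emb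
      (measurableEmbedding_addRight h) (fun x ↦ ‖φ x‖) s
  calc ∫ x in s, ‖φ (x + h) - φ x‖ ∂μ ≤ ∫ x in s, (‖φ (x + h)‖ + ‖φ x‖) ∂μ :=
        integral_mono (hφh.sub hφ).norm.integrableOn
          (hφh.norm.integrableOn.add hφ.norm.integrableOn) fun x ↦ norm_sub_le _ _
    _ = 2 * ∫ x in s, ‖φ x‖ ∂μ := by
        rw [integral_add hφh.norm.integrableOn hφ.norm.integrableOn, htrans, two_mul]
    _ ≤ 2 * ∫ x, ‖φ x‖ ∂μ := mul_le_mul_of_nonneg_left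
        (setIntegral_le_integral hφ.norm (.of_forall fun x ↦ norm_nonneg _)) zero_le_two

theorem mul_measureReal_le_two_mul_integral_norm_sub {f g : G → E} {ε : ℝ}
    (hs : MeasurableSet s) (hμs : μ s ≠ ⊤) (hsh : (· + h) ⁻¹' s = s)
    (hfg : Integrable (f - g) μ) (hg : ∀ x ∈ s, g (x + h) = g x)
    (hf : ∀ x ∈ s, ε ≤ ‖f (x + h) - f x‖) :
    ε * μ.real s ≤ 2 * ∫ x, ‖f x - g x‖ ∂μ := by
  have hincr : ∀ x ∈ s, f (x + h) - f x = (f - g) (x + h) - (f - g) x := by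
    intro x hx
    simp only [Pi.sub_apply, hg x hx]
    abel
  calc ε * μ.real s ≤ ∫ x in s, ‖(f - g) (x + h) - (f - g) x‖ ∂μ :=
        setIntegral_ge_of_const_le_real hs hμs (fun x hx ↦ hincr x hx ▸ hf x hx)
          ((hfg.comp_add_right h).sub hfg).norm.integrableOn
    _ ≤ 2 * ∫ x, ‖f x - g x‖ ∂μ := setIntegral_norm_sub_comp_add_right_le hfg hsh

end Invariant

theorem injective_far_from_directionally_constant (p : ℕ) [Fact p.Prime] (n : ℕ)
    [MeasurableSpace (Fin n → ℤ_[p])] [BorelSpace (Fin n → ℤ_[p])]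
    (μ : Measure (Fin n → ℤ_[p])) [IsProbabilityMeasure μ]
    (hinv : ∀ a : Fin n → ℤ_[p], μ.map (· + a) = μ)
    (f : (Fin n → ℤ_[p]) → ℤ_[p])
    (hcont : Continuous f) (hinj : Function.Injective f) :
    ∃ δ : ℝ, 0 < δ ∧ ∀ g : (Fin n → ℤ_[p]) → ℚ_[p], Continuous g →
      (∃ (v h : Fin n → ℤ_[p]), ‖h‖ = (p : ℝ)⁻¹ ∧
        ∀ x : Fin n → ℤ_[p], ‖x - v‖ ≤ (p : ℝ)⁻¹ → g (x + h) = g x) →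
      δ ≤ ∫ x, ‖(f x : ℚ_[p]) - g x‖ ∂μ := by
  set r : ℝ := (p : ℝ)⁻¹
  have hr : 0 < r := inv_pos.mpr (Nat.cast_pos.mpr (Fact.out : p.Prime).pos)
  have : μ.IsAddLeftInvariant := ⟨fun a ↦ by simpa only [add_comm a] using hinv a⟩
  have : μ.IsOpenPosMeasure :=
    isOpenPosMeasure_of_addLeftInvariant_of_compact _ isCompact_univ (by simp)
  have hf : Continuous fun x ↦ (f x : ℚ_[p]) := continuous_subtype_val.comp hcont
  obtain ⟨ε, hε, hεf⟩ := exists_pos_le_norm_sub_add_of_injective hf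
    (Subtype.val_injective.comp hinj) (isCompact_sphere 0 r) (by simpa using hr.ne)
  have hball_pos : 0 < μ.real (closedBall 0 r) :=
    ENNReal.toReal_pos (measure_closedBall_pos μ 0 hr).ne' (measure_ne_top μ _)
  refine ⟨ε * μ.real (closedBall 0 r) / 2, by positivity, ?_⟩
  rintro g hg ⟨v, h, hh, hgh⟩
  have hball : μ.real (closedBall v r) = μ.real (closedBall 0 r) := by
    rw [Measure.real, Measure.real, ← measure_preimage_add_right μ v,
      preimage_add_right_closedBall, sub_self]
  have key := mul_measureReal_le_two_mul_integral_norm_sub isClosed_closedBall.measurableSet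
    (measure_ne_top μ _) (IsUltrametricDist.preimage_add_right_closedBall_of_norm_le hh.le)
    ((hf.sub hg).integrable_of_hasCompactSupport (.of_compactSpace _))
    (fun x hx ↦ hgh x (mem_closedBall_iff_norm.mp hx)) (fun x _ ↦ hεf x h (by simpa using hh))
  rw [hball] at key
  linarith
end

section
/- Let f be a pReLU neural network of input dimension n and width n (i.e., a finite alternating composition of affine maps Q_p^n → Q_p^n and the coordinatewise pReLU activation, followed by a final affine map). Then either the restriction of f to Z_p^n is an affine map, or there is a ball B ⊆ Z_p^n of radius 1/p and an h ∈ Q_p^n with ‖h‖ = 1/p such that f(x+h) = f(x) for all x ∈ B. -/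
open scoped Classical

noncomputable def pReLU (p : ℕ) [Fact p.Prime] (x : ℚ_[p]) : ℚ_[p] :=
  if ‖x‖ ≤ 1 then x else 0

/-- A `pReLU`-network of width `w`, input dimension `a`, output dimension `b`:
an alternating composition of affine maps (hidden dimensions `≤ w`) and
coordinatewise `pReLU` activations, starting and ending with an affine map. -/
inductive IsPReLUNet (p : ℕ) [Fact p.Prime] (w : ℕ) : (a b : ℕ) →
    ((Fin a → ℚ_[p]) → (Fin b → ℚ_[p])) → Prop
  | affine (a b : ℕ) (A : Matrix (Fin b) (Fin a) ℚ_[p]) (c : Fin b → ℚ_[p]) :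
      IsPReLUNet p w a b (fun x => A.mulVec x + c)
  | step (a b c : ℕ) (hb : b ≤ w) (f : (Fin a → ℚ_[p]) → (Fin b → ℚ_[p]))
      (A : Matrix (Fin c) (Fin b) ℚ_[p]) (d : Fin c → ℚ_[p])
      (hf : IsPReLUNet p w a b f) :
      IsPReLUNet p w a c (fun x => A.mulVec (fun i => pReLU p (f x i)) + d)

/-!
Induct on the network. Suppose the part of the network before some activation is affine on the
unit ball `ℤ_p^n`. If every coordinate stays in `ℤ_p` there, `pReLU` acts as the identity and the
network stays affine. Otherwise some coordinate `ℓ` leaves `ℤ_p`; by the ultrametric inequality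
`|ℓ| > 1` on a whole ball of radius `1/p`, so `pReLU ∘ ℓ = 0` there. Since the width is at most
`n`, some direction `h` leaves all other coordinates unchanged, and after scaling to
`‖h‖ = 1/p` translation by `h` preserves the ball. A network constant along `h` on a ball stays so
after composing with anything.
-/

section Ultrametric

open IsUltrametricDist

lemma exists_norm_apply_eq_norm {ι E : Type*} [Fintype ι] [SeminormedAddGroup E] {v : ι → E}
    (hv : v ≠ 0) : ∃ i, ‖v i‖ = ‖v‖ := by
  obtain ⟨i₀, -⟩ := Function.ne_iff.mp hv
  have : Nonempty ι := ⟨i₀⟩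
  obtain ⟨i, -, hi⟩ := Finset.univ.exists_mem_eq_sup Finset.univ_nonempty (fun i => ‖v i‖₊)
  exact ⟨i, by rw [Pi.norm_def, hi]; rfl⟩

variable {K ι : Type*} [NormedField K] [IsUltrametricDist K] [Fintype ι]

lemma norm_dotProduct_le (r x : ι → K) : ‖r ⬝ᵥ x‖ ≤ ‖r‖ * ‖x‖ :=
  norm_sum_le_of_forall_le_of_nonneg (by positivity) fun i _ => by
    rw [norm_mul]
    exact mul_le_mul (norm_le_pi_norm r i) (norm_le_pi_norm x i) (norm_nonneg _) (norm_nonneg _)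

lemma norm_dotProduct_add_le_max {x : ι → K} (r : ι → K) (c : K) (hx : ‖x‖ ≤ 1) :
    ‖r ⬝ᵥ x + c‖ ≤ max ‖r‖ ‖c‖ :=
  (norm_add_le_max _ _).trans <| max_le_max_right _ <|
    (norm_dotProduct_le r x).trans (mul_le_of_le_one_right (norm_nonneg r) hx)

lemma exists_norm_dotProduct_add_eq_max (r : ι → K) (c : K) :
    ∃ w : ι → K, ‖w‖ ≤ 1 ∧ ‖r ⬝ᵥ w + c‖ = max ‖r‖ ‖c‖ := by
  by_cases hrc : ‖r‖ ≤ ‖c‖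
  · exact ⟨0, by simp, by simp [max_eq_right hrc]⟩
  push Not at hrc
  have hr : 0 < ‖r‖ := (norm_nonneg c).trans_lt hrc
  obtain ⟨j, hj⟩ := exists_norm_apply_eq_norm (norm_pos_iff.mp hr)
  have hrj : r j ≠ 0 := norm_pos_iff.mp (hj ▸ hr)
  refine ⟨Pi.single j (1 - c / r j), ?_, ?_⟩
  · rw [Pi.norm_single, sub_eq_add_neg]
    refine (norm_add_le_max _ _).trans (max_le (by simp) ?_)
    rw [norm_neg, norm_div, hj, div_le_one hr]
    exact hrc.le
  · rw [dotProduct_single, mul_sub, mul_one, mul_div_cancel₀ _ hrj, sub_add_cancel, hj,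
      max_eq_left hrc.le]

lemma norm_dotProduct_add_eq_of_norm_sub_le {r w x : ι → K} {c : K} {ε : ℝ}
    (hx : ‖x - w‖ ≤ ε) (hε : ‖r‖ * ε < ‖r ⬝ᵥ w + c‖) : ‖r ⬝ᵥ x + c‖ = ‖r ⬝ᵥ w + c‖ := by
  have hsmall : ‖r ⬝ᵥ (x - w)‖ < ‖r ⬝ᵥ w + c‖ :=
    ((norm_dotProduct_le r _).trans (mul_le_mul_of_nonneg_left hx (norm_nonneg r))).trans_lt hε
  rw [show r ⬝ᵥ x + c = (r ⬝ᵥ w + c) + r ⬝ᵥ (x - w) by rw [dotProduct_sub]; ring,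
    norm_add_eq_max_of_norm_ne_norm hsmall.ne', max_eq_left hsmall.le]

lemma exists_forall_one_lt_norm_dotProduct_add {r : ι → K} {c : K} {ε : ℝ} (hε : ε < 1)
    (h : 1 < max ‖r‖ ‖c‖) :
    ∃ w : ι → K, ‖w‖ ≤ 1 ∧ ∀ x, ‖x - w‖ ≤ ε → 1 < ‖r ⬝ᵥ x + c‖ := by
  obtain ⟨w, hw, hmax⟩ := exists_norm_dotProduct_add_eq_max r c
  have hrε : ‖r‖ * ε < ‖r ⬝ᵥ w + c‖ := by
    rw [hmax]
    rcases (norm_nonneg r).eq_or_lt with hr | hr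
    · rw [← hr] at h ⊢
      rw [zero_mul]
      exact zero_lt_one.trans h
    · calc ‖r‖ * ε < ‖r‖ := mul_lt_of_lt_one_right hr hε
        _ ≤ max ‖r‖ ‖c‖ := le_max_left _ _
  exact ⟨w, hw, fun x hx => by rw [norm_dotProduct_add_eq_of_norm_sub_le hx hrε, hmax]; exact h⟩

end Ultrametric

open Matrix

lemma Matrix.exists_ne_zero_forall_ne_mulVec_apply_eq_zero {K m n : Type*} [Field K]
    [Fintype m] [Fintype n] (M : Matrix m n K) (hmn : Fintype.card m ≤ Fintype.card n) (i : m) :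
    ∃ v ≠ 0, ∀ k ≠ i, (M *ᵥ v) k = 0 := by
  let L : (n → K) →ₗ[K] ({k // k ≠ i} → K) :=
    LinearMap.pi fun k => (LinearMap.proj (k : m)).comp M.mulVecLin
  have hL : LinearMap.ker L ≠ ⊥ := LinearMap.ker_ne_bot_of_finrank_lt <| by
    simp only [Module.finrank_fintype_fun_eq_card, Fintype.card_subtype_compl,
      Fintype.card_unique]
    have := Fintype.card_pos_iff.mpr ⟨i⟩
    omega
  obtain ⟨v, hv, hv0⟩ := Submodule.exists_mem_ne_zero_of_ne_bot hL
  exact ⟨v, hv0, fun k hk => congrFun hv ⟨k, hk⟩⟩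

section Padic

variable {p : ℕ} [Fact p.Prime]

lemma exists_norm_smul_eq_inv_prime {ι : Type*} [Fintype ι] {v : ι → ℚ_[p]} (hv : v ≠ 0) :
    ∃ s : ℚ_[p], ‖s • v‖ = (p : ℝ)⁻¹ := by
  obtain ⟨j, hj⟩ := exists_norm_apply_eq_norm hv
  have hvj : ‖v j‖ ≠ 0 := by rwa [hj, norm_ne_zero_iff]
  refine ⟨p * (v j)⁻¹, ?_⟩
  rw [norm_smul, norm_mul, norm_inv, Padic.norm_p, ← hj]
  field_simp

lemma pReLU_of_norm_le_one {x : ℚ_[p]} (h : ‖x‖ ≤ 1) : pReLU p x = x := if_pos h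

lemma pReLU_of_one_lt_norm {x : ℚ_[p]} (h : 1 < ‖x‖) : pReLU p x = 0 := if_neg h.not_ge

variable {a b : ℕ}

def AffineOnUnitBall (F : (Fin a → ℚ_[p]) → (Fin b → ℚ_[p])) : Prop :=
  ∃ (A : Matrix (Fin b) (Fin a) ℚ_[p]) (c : Fin b → ℚ_[p]), ∀ x, ‖x‖ ≤ 1 → F x = A *ᵥ x + c

def IsDirectionallyConstant (F : (Fin a → ℚ_[p]) → (Fin b → ℚ_[p])) : Prop :=
  ∃ v h : Fin a → ℚ_[p], ‖v‖ ≤ 1 ∧ ‖h‖ = (p : ℝ)⁻¹ ∧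
    ∀ x, ‖x - v‖ ≤ (p : ℝ)⁻¹ → F (x + h) = F x

lemma AffineOnUnitBall.congr {F G : (Fin a → ℚ_[p]) → (Fin b → ℚ_[p])}
    (hF : AffineOnUnitBall F) (h : ∀ x, ‖x‖ ≤ 1 → G x = F x) : AffineOnUnitBall G := by
  obtain ⟨A, c, hAc⟩ := hF
  exact ⟨A, c, fun x hx => (h x hx).trans (hAc x hx)⟩

lemma AffineOnUnitBall.mulVec_add {c : ℕ} {F : (Fin a → ℚ_[p]) → (Fin b → ℚ_[p])}
    (hF : AffineOnUnitBall F) (A : Matrix (Fin c) (Fin b) ℚ_[p]) (d : Fin c → ℚ_[p]) :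
    AffineOnUnitBall (fun x => A *ᵥ F x + d) := by
  obtain ⟨M, e, hMe⟩ := hF
  refine ⟨A * M, A *ᵥ e + d, fun x hx => ?_⟩
  dsimp only
  rw [hMe x hx, Matrix.mulVec_add, mulVec_mulVec, add_assoc]

lemma IsDirectionallyConstant.comp {c : ℕ} {F : (Fin a → ℚ_[p]) → (Fin b → ℚ_[p])}
    (hF : IsDirectionallyConstant F) (G : (Fin b → ℚ_[p]) → (Fin c → ℚ_[p])) :
    IsDirectionallyConstant (G ∘ F) := by
  obtain ⟨v, h, hv, hh, hvh⟩ := hF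
  exact ⟨v, h, hv, hh, fun x hx => congrArg G (hvh x hx)⟩

lemma AffineOnUnitBall.pReLU_comp_eq_or_isDirectionallyConstant
    {F : (Fin a → ℚ_[p]) → (Fin b → ℚ_[p])} (hba : b ≤ a) (hF : AffineOnUnitBall F) :
    (∀ x, ‖x‖ ≤ 1 → (fun i => pReLU p (F x i)) = F x) ∨
      IsDirectionallyConstant (fun x i => pReLU p (F x i)) := by
  obtain ⟨M, c, hMc⟩ := hF
  have hF_apply : ∀ x, ‖x‖ ≤ 1 → ∀ i, F x i = M i ⬝ᵥ x + c i := fun x hx i => by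
    rw [hMc x hx]
    rfl
  by_cases hall : ∀ i, max ‖M i‖ ‖c i‖ ≤ 1
  · refine Or.inl fun x hx => funext fun i => pReLU_of_norm_le_one ?_
    rw [hF_apply x hx]
    exact (norm_dotProduct_add_le_max _ _ hx).trans (hall i)
  push Not at hall
  obtain ⟨i, hi⟩ := hall
  have hp : (p : ℝ)⁻¹ < 1 := inv_lt_one_of_one_lt₀ (by exact_mod_cast (Fact.out : p.Prime).one_lt)
  obtain ⟨w, hw, hwi⟩ := exists_forall_one_lt_norm_dotProduct_add hp hi
  obtain ⟨v, hv0, hv⟩ := M.exists_ne_zero_forall_ne_mulVec_apply_eq_zero (by simpa using hba) i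
  obtain ⟨s, hs⟩ := exists_norm_smul_eq_inv_prime hv0
  refine Or.inr ⟨w, s • v, hw, hs, fun x hx => funext fun k => ?_⟩
  have hxh : ‖x + s • v - w‖ ≤ (p : ℝ)⁻¹ := by
    rw [add_sub_right_comm]
    exact (IsUltrametricDist.norm_add_le_max _ _).trans (max_le hx hs.le)
  have hunit : ∀ y, ‖y - w‖ ≤ (p : ℝ)⁻¹ → ‖y‖ ≤ 1 := fun y hy => by
    rw [← sub_add_cancel y w]
    exact (IsUltrametricDist.norm_add_le_max _ _).trans (max_le (hy.trans hp.le) hw)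
  dsimp only
  obtain rfl | hk := eq_or_ne k i
  · have hzero : ∀ y, ‖y - w‖ ≤ (p : ℝ)⁻¹ → pReLU p (F y k) = 0 := fun y hy =>
      pReLU_of_one_lt_norm (by rw [hF_apply y (hunit y hy)]; exact hwi y hy)
    rw [hzero _ hxh, hzero x hx]
  · rw [hMc _ (hunit _ hxh), hMc x (hunit x hx), Matrix.mulVec_add, mulVec_smul]
    simp [hv k hk]

theorem IsPReLUNet.affineOnUnitBall_or_isDirectionallyConstant {w : ℕ}
    {F : (Fin a → ℚ_[p]) → (Fin b → ℚ_[p])} (hF : IsPReLUNet p w a b F) (hwa : w ≤ a) :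
    AffineOnUnitBall F ∨ IsDirectionallyConstant F := by
  induction hF with
  | affine _ A c => exact Or.inl ⟨A, c, fun _ _ => rfl⟩
  | step _ _ hb f A d _ ih =>
    rcases ih with hf | hf
    · rcases hf.pReLU_comp_eq_or_isDirectionallyConstant (hb.trans hwa) with hid | hconst
      · exact Or.inl <| (hf.mulVec_add A d).congr fun x hx => by rw [hid x hx]
      · exact Or.inr <| hconst.comp fun y => A *ᵥ y + d
    · exact Or.inr <| hf.comp fun y => A *ᵥ (fun i => pReLU p (y i)) + d

end Padic

theorem net_affine_or_directionally_constant (p : ℕ) [Fact p.Prime] (n m : ℕ)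
    (F : (Fin n → ℚ_[p]) → (Fin m → ℚ_[p])) (hF : IsPReLUNet p n n m F) :
    (∃ (A : Matrix (Fin m) (Fin n) ℚ_[p]) (c : Fin m → ℚ_[p]),
      ∀ x : Fin n → ℤ_[p],
        F (fun i => (x i : ℚ_[p])) = A.mulVec (fun i => (x i : ℚ_[p])) + c) ∨
    (∃ (v : Fin n → ℤ_[p]) (h : Fin n → ℚ_[p]), ‖h‖ = (p : ℝ)⁻¹ ∧
      ∀ x : Fin n → ℚ_[p], (∀ i, ‖x i - (v i : ℚ_[p])‖ ≤ (p : ℝ)⁻¹) →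
        F (x + h) = F x) := by
  rcases hF.affineOnUnitBall_or_isDirectionallyConstant le_rfl with
    ⟨A, c, hAc⟩ | ⟨v, h, hv, hh, hvh⟩
  · exact Or.inl ⟨A, c, fun x =>
      hAc _ ((pi_norm_le_iff_of_nonneg zero_le_one).2 fun i => (x i).norm_le_one)⟩
  · exact Or.inr ⟨fun i => ⟨v i, (norm_le_pi_norm v i).trans hv⟩, h, hh, fun x hx =>
      hvh x ((pi_norm_le_iff_of_nonneg (by positivity)).2 hx)⟩
end

section
/- The function x ↦ x² on Z_p cannot be approximated arbitrarily well in the L¹ norm by affine functions: the infimum over a, b ∈ Q_p of ∫_{Z_p} |x² − (ax + b)| dμ(x) is strictly positive, where μ is the Haar probability measure on Z_p. -/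
open MeasureTheory

theorem square_not_affinely_approximable (p : ℕ) [Fact p.Prime]
    [MeasurableSpace ℤ_[p]] [BorelSpace ℤ_[p]]
    (μ : Measure ℤ_[p]) [IsProbabilityMeasure μ]
    (hinv : ∀ a : ℤ_[p], μ.map (· + a) = μ) :
    ∃ δ : ℝ, 0 < δ ∧ ∀ a b : ℚ_[p],
      δ ≤ ∫ x : ℤ_[p], ‖(x : ℚ_[p]) ^ 2 - (a * (x : ℚ_[p]) + b)‖ ∂μ := by
  refine ⟨‖(2 : ℚ_[p])‖ / 4, div_pos (norm_pos_iff.mpr two_ne_zero) (by norm_num), fun a b => ?_⟩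
  set g : ℤ_[p] → ℝ := fun x => ‖(x : ℚ_[p]) ^ 2 - (a * (x : ℚ_[p]) + b)‖ with hg
  have hc : Continuous (fun x : ℤ_[p] => (x : ℚ_[p])) := continuous_subtype_val
  have hcont : Continuous g := by
    apply Continuous.norm
    fun_prop
  have hint : ∀ c : ℤ_[p], Integrable (fun x => g (x + c)) μ := fun c =>
    (hcont.comp (continuous_id.add continuous_const)).integrable_of_hasCompactSupport
      (HasCompactSupport.of_compactSpace _)
  have hshift : ∀ c : ℤ_[p], ∫ x, g (x + c) ∂μ = ∫ x, g x ∂μ := by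
    intro c
    conv_rhs => rw [← hinv c]
    rw [integral_map (by fun_prop) hcont.aestronglyMeasurable]
  have h2le : ‖(2 : ℚ_[p])‖ ≤ 1 := by
    have := Padic.norm_int_le_one (p := p) 2
    push_cast at this
    exact this
  have hpt : ∀ x : ℤ_[p], ‖(2 : ℚ_[p])‖ ≤ g (x + 1) + g (x - 1) + 2 * g x := by
    intro x
    have key : (2 : ℚ_[p]) =
        (((x + 1 : ℤ_[p]) : ℚ_[p]) ^ 2 - (a * ((x + 1 : ℤ_[p]) : ℚ_[p]) + b))
        + (((x - 1 : ℤ_[p]) : ℚ_[p]) ^ 2 - (a * ((x - 1 : ℤ_[p]) : ℚ_[p]) + b))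
        - (2 : ℚ_[p]) * ((x : ℚ_[p]) ^ 2 - (a * (x : ℚ_[p]) + b)) := by
      push_cast
      ring
    have h1 : ‖(2 : ℚ_[p])‖ ≤ g (x + 1) + g (x - 1) +
        ‖(2 : ℚ_[p]) * ((x : ℚ_[p]) ^ 2 - (a * (x : ℚ_[p]) + b))‖ := by
      conv_lhs => rw [key]
      exact (norm_sub_le _ _).trans (by gcongr; exact norm_add_le _ _)
    have h2 : ‖(2 : ℚ_[p]) * ((x : ℚ_[p]) ^ 2 - (a * (x : ℚ_[p]) + b))‖ ≤ 2 * g x := by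
      rw [norm_mul]
      have hgx : (0:ℝ) ≤ g x := norm_nonneg _
      have : ‖(2 : ℚ_[p])‖ ≤ 2 := h2le.trans (by norm_num)
      exact mul_le_mul_of_nonneg_right this hgx
    linarith
  have hsum : Integrable (fun x => g (x + 1) + g (x - 1) + 2 * g x) μ := by
    have hm1 : Integrable (fun x => g (x - 1)) μ := by
      simpa [sub_eq_add_neg] using hint (-1)
    have h0 : Integrable (fun x => 2 * g x) μ := by
      have := (hint 0).const_mul 2
      simpa using this
    exact ((hint 1).add hm1).add h0
  have hI : ‖(2 : ℚ_[p])‖ ≤ 4 * ∫ x, g x ∂μ := by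
    have hmono : ∫ (_ : ℤ_[p]), ‖(2 : ℚ_[p])‖ ∂μ
        ≤ ∫ x, (g (x + 1) + g (x - 1) + 2 * g x) ∂μ :=
      integral_mono (integrable_const _) hsum hpt
    have heq : ∫ x, (g (x + 1) + g (x - 1) + 2 * g x) ∂μ = 4 * ∫ x, g x ∂μ := by
      have hm1 : Integrable (fun x => g (x - 1)) μ := by
        simpa [sub_eq_add_neg] using hint (-1)
      have h0 : Integrable (fun x => 2 * g x) μ := by
        have := (hint 0).const_mul 2
        simpa using this
      have hA : Integrable (fun x => g (x + 1) + g (x - 1)) μ := (hint 1).add hm1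
      rw [integral_add hA h0, integral_add (hint 1) hm1, integral_const_mul]
      have e1 := hshift 1
      have e2 : ∫ x, g (x - 1) ∂μ = ∫ x, g x ∂μ := by
        simpa [sub_eq_add_neg] using hshift (-1)
      rw [e1, e2]
      ring
    rw [heq] at hmono
    simpa using hmono
  linarith
end

section
/- Let m be a positive integer, D ⊆ Z_p a coset of p^m Z_p, C ⊆ D a coset of p^n Z_p for some n ≥ m, and f : C → Z_p a surjective affine map. Then for every β ∈ Z_p there exists a coset B ⊆ C of some p^k Z_p such that the affine function g(x) = f(x)/p^m + (x − β)/p^m maps B surjectively onto Z_p. -/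
/-!
The affine map `x ↦ a x + c` sends the closed ball of radius `r` about `x₀` onto the closed ball
of radius `‖a‖ r` about `a x₀ + c`, and in an ultrametric space two equal closed balls whose
radii are attained by the norm have the same radius. Surjectivity of `f` therefore forces
`‖a‖ = p ^ n`, hence `‖a + 1‖ = p ^ n` since `n ≥ 1`. Then `x ↦ (a + 1) x + c - β` also maps `C`
onto `ℤ_[p]`, so it has a zero `γ ∈ C`, and `g = ((a + 1) x + c - β) / p ^ m` has slope of norm
`p ^ (n + m)`, so it maps the ball of radius `p ^ (-(n + m))` about `γ` onto `ℤ_[p]`.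
-/

open Metric

lemma setOf_norm_sub_le_eq_closedBall {E : Type*} [SeminormedAddCommGroup E] (z : E) (s : ℝ) :
    {x : E | ‖x - z‖ ≤ s} = closedBall z s := by
  ext; simp [dist_eq_norm]

lemma radius_eq_of_closedBall_eq {E : Type*} [SeminormedAddCommGroup E] [IsUltrametricDist E]
    {x y u v : E} {s t : ℝ} (h : closedBall x s = closedBall y t) (hs : ‖u‖ = s)
    (ht : ‖v‖ = t) : s = t := by
  have hx : x ∈ closedBall y t := h ▸ mem_closedBall_self (hs ▸ norm_nonneg u)
  rw [IsUltrametricDist.closedBall_eq_of_mem hx] at h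
  apply le_antisymm
  · have : x + u ∈ closedBall x t := h ▸ by simp [hs]
    simpa [hs] using this
  · have : x + v ∈ closedBall x s := h ▸ by simp [ht]
    simpa [ht] using this

section

variable {K : Type*} [NormedField K]

lemma image_affine_closedBall (a c x₀ : K) {r : ℝ} (hr : 0 ≤ r) :
    (fun x => a * x + c) '' closedBall x₀ r = closedBall (a * x₀ + c) (‖a‖ * r) := by
  have hcomp : (fun x => a * x + c) = (c +ᵥ ·) ∘ (a • ·) := by
    ext x; simp [add_comm]
  rw [hcomp, Set.image_comp, Set.image_smul, smul_closedBall a x₀ hr, Set.image_vadd,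
    vadd_closedBall, vadd_eq_add, smul_eq_mul, add_comm]

variable [IsUltrametricDist K]

lemma image_affine_closedBall_eq_closedBall_one_iff {a c x₀ ε : K} :
    (fun x => a * x + c) '' closedBall x₀ ‖ε‖ = closedBall 0 1 ↔
      ‖a‖ * ‖ε‖ = 1 ∧ ‖a * x₀ + c‖ ≤ 1 := by
  rw [image_affine_closedBall a c x₀ (norm_nonneg ε)]
  constructor
  · intro h
    refine ⟨radius_eq_of_closedBall_eq h (norm_mul a ε) norm_one, ?_⟩
    have hmem : a * x₀ + c ∈ closedBall 0 1 := h ▸ mem_closedBall_self (by positivity)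
    simpa using hmem
  · rintro ⟨hr, hx₀⟩
    rw [hr]
    exact (IsUltrametricDist.closedBall_eq_of_mem (by simpa using hx₀)).symm

lemma norm_add_one_of_one_lt_norm {a : K} (ha : 1 < ‖a‖) : ‖a + 1‖ = ‖a‖ := by
  rw [IsUltrametricDist.norm_add_eq_max_of_norm_ne_norm (by simp [ha.ne']), norm_one,
    max_eq_left ha.le]

end

theorem juggling_step (p : ℕ) [Fact p.Prime] (m n : ℕ) (hm : 0 < m) (hmn : m ≤ n)
    (α β : ℤ_[p]) (a c : ℚ_[p])
    (hsurj : (fun x => a * x + c) ''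
        {x : ℚ_[p] | ‖x - (α : ℚ_[p])‖ ≤ (p : ℝ) ^ (-(n : ℤ))}
      = {y : ℚ_[p] | ‖y‖ ≤ 1}) :
    ∃ (k : ℕ) (γ : ℚ_[p]),
      {x : ℚ_[p] | ‖x - γ‖ ≤ (p : ℝ) ^ (-(k : ℤ))} ⊆
        {x : ℚ_[p] | ‖x - (α : ℚ_[p])‖ ≤ (p : ℝ) ^ (-(n : ℤ))} ∧
      (fun x => (a * x + c) / (p : ℚ_[p]) ^ m + (x - (β : ℚ_[p])) / (p : ℚ_[p]) ^ m) ''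
          {x : ℚ_[p] | ‖x - γ‖ ≤ (p : ℝ) ^ (-(k : ℤ))}
        = {y : ℚ_[p] | ‖y‖ ≤ 1} := by
  have hunit : {y : ℚ_[p] | ‖y‖ ≤ 1} = closedBall 0 1 := by
    simpa using setOf_norm_sub_le_eq_closedBall (0 : ℚ_[p]) 1
  simp only [setOf_norm_sub_le_eq_closedBall, hunit, ← Padic.norm_p_pow] at hsurj ⊢
  obtain ⟨ha, hfα⟩ := image_affine_closedBall_eq_closedBall_one_iff.mp hsurj
  have hpn : ‖(p : ℚ_[p]) ^ n‖ < 1 :=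
    norm_pow (p : ℚ_[p]) n ▸ pow_lt_one₀ (norm_nonneg _) Padic.norm_p_lt_one (by omega)
  have ha1 : ‖a + 1‖ = ‖a‖ :=
    norm_add_one_of_one_lt_norm (by nlinarith [norm_nonneg a, norm_nonneg ((p : ℚ_[p]) ^ n)])
  have hαβ : ‖(α : ℚ_[p]) - β‖ ≤ 1 := by
    rw [← PadicInt.coe_sub]; exact PadicInt.norm_le_one _
  obtain ⟨γ, hγ, hγ0 : (a + 1) * γ + (c - β) = 0⟩ :
      (0 : ℚ_[p]) ∈ (fun x => (a + 1) * x + (c - β)) '' closedBall α ‖(p : ℚ_[p]) ^ n‖ := by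
    refine image_affine_closedBall_eq_closedBall_one_iff.mpr ⟨ha1 ▸ ha, ?_⟩ ▸
      mem_closedBall_self zero_le_one
    calc ‖(a + 1) * α + (c - β)‖ = ‖(a * α + c) + (α - β)‖ := by ring_nf
      _ ≤ 1 := (IsUltrametricDist.norm_add_le_max _ _).trans (max_le hfα hαβ)
  refine ⟨n + m, γ, ?_, ?_⟩
  · rw [IsUltrametricDist.closedBall_eq_of_mem hγ, norm_pow, norm_pow]
    exact closedBall_subset_closedBall
      (pow_le_pow_of_le_one (norm_nonneg _) Padic.norm_p_lt_one.le (by omega))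
  · have hg : (fun x => (a * x + c) / (p : ℚ_[p]) ^ m + (x - β) / (p : ℚ_[p]) ^ m)
        = fun x => (a + 1) / (p : ℚ_[p]) ^ m * x + (c - β) / (p : ℚ_[p]) ^ m := by
      ext; ring
    rw [hg, image_affine_closedBall_eq_closedBall_one_iff, div_mul_eq_mul_div, ← add_div, hγ0]
    refine ⟨?_, by simp⟩
    have hpm : ‖(p : ℚ_[p]) ^ m‖ ≠ 0 := by simp [(Fact.out : p.Prime).ne_zero]
    rw [norm_div, ha1, pow_add, norm_mul, ← ha]
    field_simp
end

section
/- For every positive integer m there exists a juggling function g : Z_p → Z_p of type m, i.e., a function such that for every y ∈ Z_p and every coset D of p^m Z_p in Z_p, g⁻¹(y) ∩ D ≠ ∅, with the additional property that x ↦ (x, g(x)) is computed by a pReLU-network of width 2. -/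
open scoped Classical

namespace JugglingProof

variable (p : ℕ) [Fact p.Prime]

/-- The chain of "survivor-ball probes" computed in the second coordinate of the network. -/
noncomputable def sfun (m : ℕ) : ℕ → ℚ_[p] → ℚ_[p]
  | 0, _ => 0
  | j + 1, x =>
      pReLU p ((x - (j : ℚ_[p])) / (p : ℚ_[p]) ^ m + 1 + sfun m j x / (p : ℚ_[p]) ^ (m + 1))

lemma sfun_zero (m : ℕ) (x : ℚ_[p]) : sfun p m 0 x = 0 := rfl

lemma sfun_succ (m j : ℕ) (x : ℚ_[p]) :
    sfun p m (j + 1) x =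
      pReLU p ((x - (j : ℚ_[p])) / (p : ℚ_[p]) ^ m + 1 + sfun p m j x / (p : ℚ_[p]) ^ (m + 1)) :=
  rfl

lemma pReLU_eq_self {y : ℚ_[p]} (h : ‖y‖ ≤ 1) : pReLU p y = y := if_pos h

lemma pReLU_eq_zero {y : ℚ_[p]} (h : ¬ ‖y‖ ≤ 1) : pReLU p y = 0 := if_neg h

lemma pReLU_norm_le (y : ℚ_[p]) : ‖pReLU p y‖ ≤ 1 := by
  unfold pReLU
  split
  · assumption
  · simp

lemma sfun_norm_le (m j : ℕ) (x : ℚ_[p]) : ‖sfun p m j x‖ ≤ 1 := by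
  cases j with
  | zero => simp [sfun_zero]
  | succ j => exact pReLU_norm_le p _

lemma norm_div_p_pow (k : ℕ) (y : ℚ_[p]) :
    ‖y / (p : ℚ_[p]) ^ k‖ = ‖y‖ * (p : ℝ) ^ k := by
  rw [norm_div, norm_pow, Padic.norm_p, inv_pow, div_eq_mul_inv, inv_inv]

lemma one_lt_pR : (1 : ℝ) < (p : ℝ) := by
  exact_mod_cast (Fact.out : p.Prime).one_lt

lemma norm_natCast_le_one (c : ℕ) : ‖((c : ℚ_[p]))‖ ≤ 1 := by
  have h := Padic.norm_int_le_one (p := p) (c : ℤ)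
  simpa using h

lemma int_sep (m : ℕ) {c j : ℕ} (hc : c < p ^ m) (hj : j < p ^ m) (hne : c ≠ j) :
    ¬ ‖((c : ℚ_[p]) - (j : ℚ_[p]))‖ ≤ ((p : ℝ) ^ m)⁻¹ := by
  have hcast : ((c : ℚ_[p]) - (j : ℚ_[p])) = (((c : ℤ) - (j : ℤ) : ℤ) : ℚ_[p]) := by
    push_cast; ring
  have hzpow : ((p : ℝ) ^ m)⁻¹ = (p : ℝ) ^ (-(m : ℤ)) := by
    rw [zpow_neg, zpow_natCast]
  rw [hcast, hzpow, Padic.norm_int_le_pow_iff_dvd]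
  intro hdvd
  have habs : ((p : ℤ) ^ m) ∣ |(c : ℤ) - j| := (dvd_abs _ _).mpr hdvd
  have hpos : (0 : ℤ) < |(c : ℤ) - j| :=
    abs_pos.mpr (sub_ne_zero.mpr (by exact_mod_cast hne))
  have hle := Int.le_of_dvd hpos habs
  have hcZ : (c : ℤ) < (p : ℤ) ^ m := by exact_mod_cast hc
  have hjZ : (j : ℤ) < (p : ℤ) ^ m := by exact_mod_cast hj
  have h0c : (0 : ℤ) ≤ (c : ℤ) := Int.natCast_nonneg c
  have h0j : (0 : ℤ) ≤ (j : ℤ) := Int.natCast_nonneg j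
  have habslt : |(c : ℤ) - j| < (p : ℤ) ^ m := by
    rw [abs_sub_lt_iff]
    constructor <;> linarith
  linarith

/-- Main invariant:
(B) on the cosets not yet probed, `sfun` vanishes;
(C) for every coset already probed there is a ball inside the coset on which `sfun`
is an affine bijection onto `ℤ_p`. -/
lemma key (m : ℕ) (hm : 0 < m) : ∀ j : ℕ, j ≤ p ^ m →
    (∀ x : ℚ_[p], ‖x‖ ≤ 1 → ∀ c : ℕ, c < p ^ m → j ≤ c →
        ‖x - (c : ℚ_[p])‖ ≤ ((p : ℝ) ^ m)⁻¹ → sfun p m j x = 0) ∧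
    (∀ c : ℕ, c < j →
        ∃ a e : ℚ_[p], ‖a - (c : ℚ_[p])‖ ≤ ((p : ℝ) ^ m)⁻¹ ∧ ‖e‖ ≤ ((p : ℝ) ^ m)⁻¹ ∧
          ∀ v : ℚ_[p], ‖v‖ ≤ 1 → sfun p m j (a + e * v) = v) := by
  have hp1 : (1 : ℝ) < (p : ℝ) := one_lt_pR p
  have hpm0 : (0 : ℝ) < (p : ℝ) ^ m := by positivity
  have hpm1' : (0 : ℝ) < (p : ℝ) ^ (m + 1) := by positivity
  have hpmge1 : (1 : ℝ) ≤ (p : ℝ) ^ m := one_le_pow₀ hp1.le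
  have hεle1 : ((p : ℝ) ^ m)⁻¹ ≤ 1 := inv_le_one_of_one_le₀ hpmge1
  have hQp0 : ((p : ℚ_[p])) ≠ 0 := by
    exact_mod_cast (Fact.out : p.Prime).ne_zero
  have hQpm0 : ((p : ℚ_[p])) ^ m ≠ 0 := pow_ne_zero _ hQp0
  have hQpm10 : ((p : ℚ_[p])) ^ (m + 1) ≠ 0 := pow_ne_zero _ hQp0
  have hnormpm : ‖((p : ℚ_[p])) ^ m‖ = ((p : ℝ) ^ m)⁻¹ := by
    rw [norm_pow, Padic.norm_p, inv_pow]
  intro j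
  induction j with
  | zero =>
    intro _
    exact ⟨fun x _ c _ _ _ => rfl, fun c hc => absurd hc (Nat.not_lt_zero c)⟩
  | succ j ih =>
    intro hj1
    have hj' : j ≤ p ^ m := Nat.le_of_succ_le hj1
    have hjlt : j < p ^ m := hj1
    obtain ⟨hB, hC⟩ := ih hj'
    constructor
    · -- (B) at j+1
      intro x hx c hcN hjc hxc
      have hs0 : sfun p m j x = 0 := hB x hx c hcN (Nat.le_of_succ_le hjc) hxc
      rw [sfun_succ, hs0, zero_div, add_zero]
      have hne : c ≠ j := by omega
      have hcj := int_sep p m hcN hjlt hne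
      have hcjlt : ((p : ℝ) ^ m)⁻¹ < ‖(c : ℚ_[p]) - (j : ℚ_[p])‖ := not_le.mp hcj
      have h1 : ‖x - (j : ℚ_[p])‖ = ‖(c : ℚ_[p]) - (j : ℚ_[p])‖ := by
        have hsplit : x - (j : ℚ_[p]) = (x - (c : ℚ_[p])) + ((c : ℚ_[p]) - (j : ℚ_[p])) := by
          ring
        rw [hsplit, Padic.add_eq_max_of_ne (ne_of_lt (lt_of_le_of_lt hxc hcjlt))]
        exact max_eq_right (le_of_lt (lt_of_le_of_lt hxc hcjlt))
      have hbig : 1 < ‖(x - (j : ℚ_[p])) / (p : ℚ_[p]) ^ m‖ := by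
        rw [norm_div_p_pow, h1]
        calc (1 : ℝ) = ((p : ℝ) ^ m)⁻¹ * (p : ℝ) ^ m := (inv_mul_cancel₀ hpm0.ne').symm
          _ < ‖(c : ℚ_[p]) - (j : ℚ_[p])‖ * (p : ℝ) ^ m :=
              mul_lt_mul_of_pos_right hcjlt hpm0
      apply pReLU_eq_zero
      rw [Padic.add_eq_max_of_ne (by rw [norm_one]; exact ne_of_gt hbig), norm_one]
      exact not_le.mpr (lt_max_of_lt_left hbig)
    · -- (C) at j+1
      intro c hc
      rcases Nat.lt_succ_iff_lt_or_eq.mp hc with hlt | heq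
      · -- old coset c < j : transport the survivor ball through the probe
        obtain ⟨a, e, ha, he, hcov⟩ := hC c hlt
        set Δ : ℚ_[p] := e / (p : ℚ_[p]) ^ m + 1 / (p : ℚ_[p]) ^ (m + 1) with hΔdef
        set Γ : ℚ_[p] := (a - (j : ℚ_[p])) / (p : ℚ_[p]) ^ m + 1 with hΓdef
        have he1 : ‖e / (p : ℚ_[p]) ^ m‖ ≤ 1 := by
          rw [norm_div_p_pow]
          calc ‖e‖ * (p : ℝ) ^ m ≤ ((p : ℝ) ^ m)⁻¹ * (p : ℝ) ^ m :=
                mul_le_mul_of_nonneg_right he hpm0.le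
            _ = 1 := inv_mul_cancel₀ hpm0.ne'
        have hμ : ‖(1 : ℚ_[p]) / (p : ℚ_[p]) ^ (m + 1)‖ = (p : ℝ) ^ (m + 1) := by
          rw [norm_div_p_pow, norm_one, one_mul]
        have hpm1gt1 : (1 : ℝ) < (p : ℝ) ^ (m + 1) := one_lt_pow₀ hp1 (Nat.succ_ne_zero m)
        have helt : ‖e / (p : ℚ_[p]) ^ m‖ < ‖(1 : ℚ_[p]) / (p : ℚ_[p]) ^ (m + 1)‖ := by
          rw [hμ]; exact lt_of_le_of_lt he1 hpm1gt1
        have hΔ : ‖Δ‖ = (p : ℝ) ^ (m + 1) := by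
          rw [hΔdef, Padic.add_eq_max_of_ne (ne_of_lt helt)]
          rw [hμ]
          exact max_eq_right (le_of_lt (lt_of_le_of_lt he1 hpm1gt1))
        have hΔ0 : Δ ≠ 0 := by
          intro h
          rw [h, norm_zero] at hΔ
          linarith
        have haj : ‖a - (j : ℚ_[p])‖ ≤ 1 := by
          have hsplit : a - (j : ℚ_[p]) = (a - (c : ℚ_[p])) + ((c : ℚ_[p]) - (j : ℚ_[p])) := by
            ring
          rw [hsplit]
          refine le_trans (Padic.nonarchimedean _ _) (max_le (le_trans ha hεle1) ?_)
          have hcast : ((c : ℚ_[p]) - (j : ℚ_[p])) = (((c : ℤ) - (j : ℤ) : ℤ) : ℚ_[p]) := by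
            push_cast; ring
          rw [hcast]
          exact Padic.norm_int_le_one _
        have hΓ : ‖Γ‖ ≤ (p : ℝ) ^ m := by
          rw [hΓdef]
          refine le_trans (Padic.nonarchimedean _ _) (max_le ?_ ?_)
          · rw [norm_div_p_pow]
            calc ‖a - (j : ℚ_[p])‖ * (p : ℝ) ^ m ≤ 1 * (p : ℝ) ^ m :=
                  mul_le_mul_of_nonneg_right haj hpm0.le
              _ = (p : ℝ) ^ m := one_mul _
          · rw [norm_one]; exact hpmge1
        have hsmall : ‖e * Γ / Δ‖ ≤ ((p : ℝ) ^ m)⁻¹ := by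
          rw [norm_div, norm_mul, hΔ]
          have h2 : ‖e‖ * ‖Γ‖ ≤ 1 := by
            calc ‖e‖ * ‖Γ‖ ≤ ((p : ℝ) ^ m)⁻¹ * (p : ℝ) ^ m :=
                  mul_le_mul he hΓ (norm_nonneg _) (inv_nonneg.mpr hpm0.le)
              _ = 1 := inv_mul_cancel₀ hpm0.ne'
          calc ‖e‖ * ‖Γ‖ / (p : ℝ) ^ (m + 1) ≤ 1 / (p : ℝ) ^ (m + 1) := by gcongr
            _ ≤ ((p : ℝ) ^ m)⁻¹ := by
                rw [one_div]
                exact inv_anti₀ hpm0 (pow_le_pow_right₀ hp1.le (Nat.le_succ m))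
        refine ⟨a - e * Γ / Δ, e / Δ, ?_, ?_, ?_⟩
        · have hsplit : a - e * Γ / Δ - (c : ℚ_[p]) = (a - (c : ℚ_[p])) + (-(e * Γ / Δ)) := by
            ring
          rw [hsplit]
          refine le_trans (Padic.nonarchimedean _ _) (max_le ha ?_)
          rw [norm_neg]
          exact hsmall
        · rw [norm_div, hΔ]
          calc ‖e‖ / (p : ℝ) ^ (m + 1) ≤ ‖e‖ := div_le_self (norm_nonneg e) hpm1gt1.le
            _ ≤ ((p : ℝ) ^ m)⁻¹ := he
        · intro w hw
          set v : ℚ_[p] := (w - Γ) / Δ with hvdef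
          have hwΓ : ‖w - Γ‖ ≤ (p : ℝ) ^ m := by
            have hsplit : w - Γ = w + (-Γ) := by ring
            rw [hsplit]
            refine le_trans (Padic.nonarchimedean _ _)
              (max_le (le_trans hw hpmge1) ?_)
            rw [norm_neg]; exact hΓ
          have hv : ‖v‖ ≤ 1 := by
            rw [hvdef, norm_div, hΔ, div_le_one hpm1']
            exact le_trans hwΓ (pow_le_pow_right₀ hp1.le (Nat.le_succ m))
          have hx : a - e * Γ / Δ + e / Δ * w = a + e * v := by
            rw [hvdef]; field_simp; ring
          have hΔv : Δ * v = w - Γ := by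
            rw [hvdef]; field_simp
          have harg : (a + e * v - (j : ℚ_[p])) / (p : ℚ_[p]) ^ m + 1 +
              v / (p : ℚ_[p]) ^ (m + 1) = w := by
            have h5 : (a + e * v - (j : ℚ_[p])) / (p : ℚ_[p]) ^ m + 1 +
                v / (p : ℚ_[p]) ^ (m + 1) = Γ + Δ * v := by
              rw [hΓdef, hΔdef]
              field_simp
              ring
            rw [h5, hΔv]
            ring
          rw [hx, sfun_succ, hcov v hv, harg]
          exact pReLU_eq_self p hw
      · -- fresh coset c = j
        subst heq
        refine ⟨(c : ℚ_[p]) - (p : ℚ_[p]) ^ m, (p : ℚ_[p]) ^ m, ?_, ?_, ?_⟩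
        · have h1 : (c : ℚ_[p]) - (p : ℚ_[p]) ^ m - (c : ℚ_[p]) = -((p : ℚ_[p]) ^ m) := by
            ring
          rw [h1, norm_neg, hnormpm]
        · rw [hnormpm]
        · intro v hv
          set x : ℚ_[p] := (c : ℚ_[p]) - (p : ℚ_[p]) ^ m + (p : ℚ_[p]) ^ m * v with hxdef
          have hxj : x - (c : ℚ_[p]) = (p : ℚ_[p]) ^ m * (v - 1) := by
            rw [hxdef]; ring
          have hv1 : ‖v - 1‖ ≤ 1 := by
            have : v - 1 = v + (-1 : ℚ_[p]) := by ring
            rw [this]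
            refine le_trans (Padic.nonarchimedean _ _) (max_le hv ?_)
            rw [norm_neg, norm_one]
          have hnear : ‖x - (c : ℚ_[p])‖ ≤ ((p : ℝ) ^ m)⁻¹ := by
            rw [hxj, norm_mul, hnormpm]
            calc ((p : ℝ) ^ m)⁻¹ * ‖v - 1‖ ≤ ((p : ℝ) ^ m)⁻¹ * 1 :=
                mul_le_mul_of_nonneg_left hv1 (inv_nonneg.mpr hpm0.le)
              _ = ((p : ℝ) ^ m)⁻¹ := mul_one _
          have hx1 : ‖x‖ ≤ 1 := by
            have : x = (x - (c : ℚ_[p])) + (c : ℚ_[p]) := by ring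
            rw [this]
            exact le_trans (Padic.nonarchimedean _ _)
              (max_le (le_trans hnear hεle1) (norm_natCast_le_one p c))
          have h0 : sfun p m c x = 0 := hB x hx1 c hjlt le_rfl hnear
          rw [sfun_succ, h0, zero_div, add_zero]
          have harg : (x - (c : ℚ_[p])) / (p : ℚ_[p]) ^ m + 1 = v := by
            rw [hxj, mul_div_cancel_left₀ _ hQpm0]
            ring
          rw [harg]
          exact pReLU_eq_self p hv

/-- The width-2 network computing `x ↦ (x, pre_j(x))` where `sfun (j+1) = pReLU ∘ pre_j`. -/
lemma net (m : ℕ) : ∀ j : ℕ, ∃ F : (Fin 1 → ℚ_[p]) → (Fin 2 → ℚ_[p]),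
    IsPReLUNet p 2 1 2 F ∧ ∀ x : ℚ_[p], ‖x‖ ≤ 1 →
      F (fun _ => x) =
        ![x, (x - (j : ℚ_[p])) / (p : ℚ_[p]) ^ m + 1 + sfun p m j x / (p : ℚ_[p]) ^ (m + 1)] := by
  intro j
  induction j with
  | zero =>
    refine ⟨_, IsPReLUNet.affine 1 2 (Matrix.of ![![1], ![1 / (p : ℚ_[p]) ^ m]]) ![0, 1], ?_⟩
    intro x hx
    funext i
    fin_cases i <;>
      simp [Matrix.mulVec, dotProduct, Fin.sum_univ_succ, sfun_zero] <;>
      ring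
  | succ j ih =>
    obtain ⟨F, hF, hev⟩ := ih
    refine ⟨_, IsPReLUNet.step 1 2 2 le_rfl F
      (Matrix.of ![![1, 0], ![1 / (p : ℚ_[p]) ^ m, 1 / (p : ℚ_[p]) ^ (m + 1)]])
      ![0, 1 - ((j : ℚ_[p]) + 1) / (p : ℚ_[p]) ^ m] hF, ?_⟩
    intro x hx
    have hFx := hev x hx
    have h0 : pReLU p (F (fun _ => x) 0) = x := by
      rw [hFx]
      simp only [Matrix.cons_val_zero]
      exact pReLU_eq_self p hx
    have h1 : pReLU p (F (fun _ => x) 1) = sfun p m (j + 1) x := by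
      rw [hFx]
      simp only [Matrix.cons_val_one, Matrix.head_cons]
      exact (sfun_succ p m j x).symm
    funext i
    fin_cases i <;>
      simp [Matrix.mulVec, dotProduct, Fin.sum_univ_succ, h0, h1] <;>
      push_cast <;>
      ring

end JugglingProof

theorem exists_juggling_function (p : ℕ) [Fact p.Prime] (m : ℕ) (hm : 0 < m) :
    ∃ g : ℤ_[p] → ℤ_[p],
      (∀ y β : ℤ_[p], ∃ x : ℤ_[p], g x = y ∧ ‖x - β‖ ≤ (p : ℝ) ^ (-(m : ℤ))) ∧
      ∃ F : (Fin 1 → ℚ_[p]) → (Fin 2 → ℚ_[p]), IsPReLUNet p 2 1 2 F ∧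
        ∀ x : ℤ_[p], F (fun _ => (x : ℚ_[p])) = ![(x : ℚ_[p]), (g x : ℚ_[p])] := by
  classical
  have hp1 : (1 : ℝ) < (p : ℝ) := JugglingProof.one_lt_pR p
  have hpm0 : (0 : ℝ) < (p : ℝ) ^ m := by positivity
  have hpmge1 : (1 : ℝ) ≤ (p : ℝ) ^ m := one_le_pow₀ hp1.le
  have hεle1 : ((p : ℝ) ^ m)⁻¹ ≤ 1 := inv_le_one_of_one_le₀ hpmge1
  have hN1 : 0 < p ^ m := pow_pos (Fact.out : p.Prime).pos m
  refine ⟨fun z => ⟨JugglingProof.sfun p m (p ^ m) (z : ℚ_[p]),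
    JugglingProof.sfun_norm_le p m (p ^ m) _⟩, ?_, ?_⟩
  · -- juggling property
    intro y β
    set c := β.appr m with hc_def
    have hc : c < p ^ m := PadicInt.appr_lt β m
    have hβc : ‖(β : ℚ_[p]) - (c : ℚ_[p])‖ ≤ ((p : ℝ) ^ m)⁻¹ := by
      have h1 := (PadicInt.norm_le_pow_iff_mem_span_pow (β - (c : ℤ_[p])) m).mpr
        (PadicInt.appr_spec m β)
      rw [PadicInt.norm_def] at h1
      have h2 : ((β - (c : ℤ_[p]) : ℤ_[p]) : ℚ_[p]) = (β : ℚ_[p]) - (c : ℚ_[p]) := by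
        push_cast; ring
      rw [h2, zpow_neg, zpow_natCast] at h1
      exact h1
    obtain ⟨a, e, ha, he, hcov⟩ := (JugglingProof.key p m hm (p ^ m) le_rfl).2 c hc
    have hy1 : ‖((y : ℤ_[p]) : ℚ_[p])‖ ≤ 1 := y.2
    set x₀ : ℚ_[p] := a + e * (y : ℚ_[p]) with hx₀def
    have hx₀c : ‖x₀ - (c : ℚ_[p])‖ ≤ ((p : ℝ) ^ m)⁻¹ := by
      have h3 : x₀ - (c : ℚ_[p]) = (a - (c : ℚ_[p])) + e * (y : ℚ_[p]) := by
        rw [hx₀def]; ring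
      rw [h3]
      refine le_trans (Padic.nonarchimedean _ _) (max_le ha ?_)
      rw [norm_mul]
      exact le_trans (mul_le_of_le_one_right (norm_nonneg _) hy1) he
    have hx₀1 : ‖x₀‖ ≤ 1 := by
      have h4 : x₀ = (x₀ - (c : ℚ_[p])) + (c : ℚ_[p]) := by ring
      rw [h4]
      exact le_trans (Padic.nonarchimedean _ _)
        (max_le (le_trans hx₀c hεle1) (JugglingProof.norm_natCast_le_one p c))
    set xZ : ℤ_[p] := ⟨x₀, hx₀1⟩ with hxZdef
    refine ⟨xZ, ?_, ?_⟩
    · exact Subtype.ext (hcov _ hy1)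
    · rw [PadicInt.norm_def]
      have hxZcoe : ((xZ : ℤ_[p]) : ℚ_[p]) = x₀ := rfl
      have h5 : ((xZ - β : ℤ_[p]) : ℚ_[p]) = x₀ - (β : ℚ_[p]) := by
        rw [PadicInt.coe_sub, hxZcoe]
      rw [h5]
      have h6 : x₀ - (β : ℚ_[p]) = (x₀ - (c : ℚ_[p])) + ((c : ℚ_[p]) - (β : ℚ_[p])) := by
        ring
      rw [h6, zpow_neg, zpow_natCast]
      refine le_trans (Padic.nonarchimedean _ _) (max_le hx₀c ?_)
      rw [norm_sub_rev]
      exact hβc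
  · -- the network
    obtain ⟨k, hk⟩ : ∃ k, p ^ m = k + 1 := ⟨p ^ m - 1, (Nat.succ_pred_eq_of_pos hN1).symm⟩
    obtain ⟨F, hFnet, hFev⟩ := JugglingProof.net p m k
    refine ⟨_, IsPReLUNet.step 1 2 2 le_rfl F (1 : Matrix (Fin 2) (Fin 2) ℚ_[p]) 0 hFnet, ?_⟩
    intro x
    have hx1 : ‖(x : ℚ_[p])‖ ≤ 1 := x.2
    have hFx := hFev (x : ℚ_[p]) hx1
    have h0 : pReLU p (F (fun _ => (x : ℚ_[p])) 0) = (x : ℚ_[p]) := by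
      rw [hFx]
      simp only [Matrix.cons_val_zero]
      exact JugglingProof.pReLU_eq_self p hx1
    have h1 : pReLU p (F (fun _ => (x : ℚ_[p])) 1) = JugglingProof.sfun p m (p ^ m) (x : ℚ_[p]) := by
      rw [hFx]
      simp only [Matrix.cons_val_one, Matrix.head_cons]
      rw [hk]
      exact (JugglingProof.sfun_succ p m k (x : ℚ_[p])).symm
    funext i
    simp only [Matrix.one_mulVec, Pi.add_apply, Pi.zero_apply, add_zero]
    fin_cases i
    · exact h0
    · exact h1
end

section
/- Let g : Z_p → Z_p be a juggling function of type m (for every y ∈ Z_p and every coset D of p^m Z_p, g⁻¹(y) ∩ D ≠ ∅). Then the function f : Z_p → Z_p^d with f(x) = (x, g(x), g²(x), …, g^{d−1}(x)), where g^k denotes k-fold iteration, is a decoding function of type (d,m): for every y ∈ Z_p^d there exists x ∈ Z_p with y − f(x) ∈ p^m Z_p^d. -/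
theorem juggling_gives_decoding (p : ℕ) [Fact p.Prime] (d m : ℕ) (hm : 0 < m)
    (g : ℤ_[p] → ℤ_[p])
    (hg : ∀ y β : ℤ_[p], ∃ x : ℤ_[p], g x = y ∧ ‖x - β‖ ≤ (p : ℝ) ^ (-(m : ℤ))) :
    ∀ y : Fin d → ℤ_[p], ∃ x : ℤ_[p],
      ∀ i : Fin d, ‖y i - g^[(i : ℕ)] x‖ ≤ (p : ℝ) ^ (-(m : ℤ)) := by
  induction d with
  | zero => intro y; exact ⟨0, fun i => i.elim0⟩
  | succ n ih =>
    intro y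
    obtain ⟨x', hx'⟩ := ih (fun i => y i.succ)
    obtain ⟨x, hgx, hx⟩ := hg x' (y 0)
    refine ⟨x, fun i => ?_⟩
    refine Fin.cases ?_ (fun j => ?_) i
    · simpa [norm_sub_rev] using hx
    · have : g^[(j.succ : ℕ)] x = g^[(j : ℕ)] x' := by
        rw [Fin.val_succ, Function.iterate_succ_apply, hgx]
      rw [this]
      exact hx' j
end
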